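/- Under the D1Q2 scheme with s ∈ (0,1], λ ≥ M, initial conserved moment (u_j^0)_{j∈ℤ} ⊂ [α,β] with finite sequential total variation, and f^±_j^0 = h^±(u_j^0), one has for all n ∈ ℕ: TV(f⁺^n) + TV(f⁻^n) ≤ TV(u^0), TV(u^n) ≤ TV(u^0), and TV(v^n) ≤ λ TV(u^0), where u_j^n = f⁺_j^n + f⁻_j^n and v_j^n = λ(f⁺_j^n − f⁻_j^n). -/

import Mathlib

/-- Equilibrium distribution function for velocity `+λ`. -/
noncomputable def hp (lam : ℝ) (flux : ℝ → ℝ) (ξ : ℝ) : ℝ := (lam * ξ + flux ξ) / (2 * lam)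

/-- Equilibrium distribution function for velocity `-λ`. -/
noncomputable def hm (lam : ℝ) (flux : ℝ → ℝ) (ξ : ℝ) : ℝ := (lam * ξ - flux ξ) / (2 * lam)

/-- Sequential total variation of a sequence indexed by `ℤ`. -/
noncomputable def tvSeq (w : ℤ → ℝ) : ENNReal := ∑' j : ℤ, ENNReal.ofReal |w (j + 1) - w j|

/-!
Under the subcharacteristic condition `|φ'| ≤ λ` both equilibria `h^±` are nondecreasing and
`h⁺ + h⁻ = id`, so `|Δh⁺(u)| + |Δh⁻(u)| = |Δu|` along any sequence with values in `[α, β]`.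
One step of the scheme is a convex combination of `f^±` and `h^±(u)` followed by a shift, so
`TV(f⁺) + TV(f⁻)` at time `n + 1` is at most `(1 - s)(TV(f⁺) + TV(f⁻)) + s TV(u)` at time `n`,
and `TV(u) ≤ TV(f⁺) + TV(f⁻)`; at time `0` the sum equals `TV(u⁰)`. The same convexity keeps `f^±` in `[h^±(α), h^±(β)]`, hence `u` in `[α, β]`, so the
equilibria stay monotone along the whole evolution.
-/

open Set

theorem tvSeq_comp_add_const (w : ℤ → ℝ) (c : ℤ) : tvSeq (fun j => w (j + c)) = tvSeq w := by
  unfold tvSeq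
  rw [← (Equiv.addRight c).tsum_eq (fun j => ENNReal.ofReal |w (j + 1) - w j|)]
  refine tsum_congr fun j => ?_
  simp only [Equiv.coe_addRight, add_right_comm j 1 c]

theorem tvSeq_mul_add_mul_le (a b : ℝ) (w w' : ℤ → ℝ) :
    tvSeq (fun j => a * w j + b * w' j) ≤
      ENNReal.ofReal |a| * tvSeq w + ENNReal.ofReal |b| * tvSeq w' := by
  unfold tvSeq
  rw [← ENNReal.tsum_mul_left, ← ENNReal.tsum_mul_left, ← ENNReal.tsum_add]
  refine ENNReal.tsum_le_tsum fun j => ?_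
  rw [← ENNReal.ofReal_mul (abs_nonneg a), ← ENNReal.ofReal_mul (abs_nonneg b),
    ← ENNReal.ofReal_add (by positivity) (by positivity)]
  apply ENNReal.ofReal_le_ofReal
  calc |(a * w (j + 1) + b * w' (j + 1)) - (a * w j + b * w' j)|
      = |a * (w (j + 1) - w j) + b * (w' (j + 1) - w' j)| := by ring_nf
    _ ≤ |a * (w (j + 1) - w j)| + |b * (w' (j + 1) - w' j)| := abs_add_le _ _
    _ = |a| * |w (j + 1) - w j| + |b| * |w' (j + 1) - w' j| := by rw [abs_mul, abs_mul]

theorem tvSeq_add_le (w w' : ℤ → ℝ) :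
    tvSeq (fun j => w j + w' j) ≤ tvSeq w + tvSeq w' := by
  simpa using tvSeq_mul_add_mul_le 1 1 w w'

theorem tvSeq_mul_sub_le (c : ℝ) (w w' : ℤ → ℝ) :
    tvSeq (fun j => c * (w j - w' j)) ≤ ENNReal.ofReal |c| * (tvSeq w + tvSeq w') := by
  simpa [mul_sub, sub_eq_add_neg, mul_add] using tvSeq_mul_add_mul_le c (-c) w w'

section Equilibrium

variable {lam : ℝ} {flux : ℝ → ℝ}

theorem hp_add_hm (hlam : lam ≠ 0) (ξ : ℝ) : hp lam flux ξ + hm lam flux ξ = ξ := by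
  unfold hp hm
  field_simp
  ring

theorem monotoneOn_hp (hlam : 0 < lam) {S : Set ℝ}
    (hsub : ∀ a ∈ S, ∀ b ∈ S, |flux b - flux a| ≤ lam * |b - a|) :
    MonotoneOn (hp lam flux) S := by
  intro a ha b hb hab
  have hflux := (abs_le.1 (hsub a ha b hb)).1
  rw [abs_of_nonneg (sub_nonneg.2 hab)] at hflux
  unfold hp
  gcongr ?_ / _
  linarith

theorem monotoneOn_hm (hlam : 0 < lam) {S : Set ℝ}
    (hsub : ∀ a ∈ S, ∀ b ∈ S, |flux b - flux a| ≤ lam * |b - a|) :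
    MonotoneOn (hm lam flux) S := by
  intro a ha b hb hab
  have hflux := (abs_le.1 (hsub a ha b hb)).2
  rw [abs_of_nonneg (sub_nonneg.2 hab)] at hflux
  unfold hm
  gcongr ?_ / _
  linarith

theorem abs_hp_sub_add_abs_hm_sub (hlam : 0 < lam) {S : Set ℝ}
    (hsub : ∀ a ∈ S, ∀ b ∈ S, |flux b - flux a| ≤ lam * |b - a|)
    {a b : ℝ} (ha : a ∈ S) (hb : b ∈ S) :
    |hp lam flux b - hp lam flux a| + |hm lam flux b - hm lam flux a| = |b - a| := by
  have hsum : (hp lam flux b - hp lam flux a) + (hm lam flux b - hm lam flux a) = b - a := by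
    linarith [hp_add_hm (flux := flux) hlam.ne' a, hp_add_hm (flux := flux) hlam.ne' b]
  rw [← hsum, (abs_add_eq_add_abs_iff _ _).2]
  rcases le_total a b with hab | hba
  · exact .inl ⟨sub_nonneg.2 (monotoneOn_hp hlam hsub ha hb hab),
      sub_nonneg.2 (monotoneOn_hm hlam hsub ha hb hab)⟩
  · exact .inr ⟨sub_nonpos.2 (monotoneOn_hp hlam hsub hb ha hba),
      sub_nonpos.2 (monotoneOn_hm hlam hsub hb ha hba)⟩

theorem tvSeq_hp_comp_add_tvSeq_hm_comp (hlam : 0 < lam) {S : Set ℝ}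
    (hsub : ∀ a ∈ S, ∀ b ∈ S, |flux b - flux a| ≤ lam * |b - a|)
    {w : ℤ → ℝ} (hw : ∀ j, w j ∈ S) :
    tvSeq (fun j => hp lam flux (w j)) + tvSeq (fun j => hm lam flux (w j)) = tvSeq w := by
  unfold tvSeq
  rw [← ENNReal.tsum_add]
  refine tsum_congr fun j => ?_
  rw [← ENNReal.ofReal_add (abs_nonneg _) (abs_nonneg _),
    abs_hp_sub_add_abs_hm_sub hlam hsub (hw j) (hw (j + 1))]

theorem add_mem_Icc_of_mem_Icc_hp_hm (hlam : lam ≠ 0) {α β x y : ℝ}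
    (hx : x ∈ Icc (hp lam flux α) (hp lam flux β)) (hy : y ∈ Icc (hm lam flux α) (hm lam flux β)) :
    x + y ∈ Icc α β := by
  have hα := hp_add_hm (flux := flux) hlam α
  have hβ := hp_add_hm (flux := flux) hlam β
  exact ⟨by linarith [hx.1, hy.1], by linarith [hx.2, hy.2]⟩

end Equilibrium

structure IsD1Q2Solution (lam s : ℝ) (flux : ℝ → ℝ) (fp fm u : ℕ → ℤ → ℝ) : Prop where
  moment : ∀ n j, u n j = fp n j + fm n j
  step_plus : ∀ n j, fp (n + 1) j = (1 - s) * fp n (j - 1) + s * hp lam flux (u n (j - 1))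
  step_minus : ∀ n j, fm (n + 1) j = (1 - s) * fm n (j + 1) + s * hm lam flux (u n (j + 1))

namespace IsD1Q2Solution

variable {lam s : ℝ} {flux : ℝ → ℝ} {fp fm u : ℕ → ℤ → ℝ}

theorem tvSeq_moment_le (h : IsD1Q2Solution lam s flux fp fm u) (n : ℕ) :
    tvSeq (u n) ≤ tvSeq (fp n) + tvSeq (fm n) := by
  simpa only [← h.moment] using tvSeq_add_le (fp n) (fm n)

theorem moment_mem_Icc (h : IsD1Q2Solution lam s flux fp fm u) (hlam : 0 < lam) (hs : s ∈ Icc 0 1)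
    {α β : ℝ} (hsub : ∀ a ∈ Icc α β, ∀ b ∈ Icc α β, |flux b - flux a| ≤ lam * |b - a|)
    (hinit : ∀ j, u 0 j ∈ Icc α β)
    (hinitp : ∀ j, fp 0 j = hp lam flux (u 0 j)) (hinitm : ∀ j, fm 0 j = hm lam flux (u 0 j))
    (n : ℕ) (j : ℤ) : u n j ∈ Icc α β := by
  have hp_mem := (monotoneOn_hp hlam hsub).mapsTo_Icc
  have hm_mem := (monotoneOn_hm hlam hsub).mapsTo_Icc
  have hcombo : ∀ {a b x y : ℝ}, x ∈ Icc a b → y ∈ Icc a b → (1 - s) * x + s * y ∈ Icc a b :=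
    fun hx hy => by
      simpa only [smul_eq_mul] using convex_Icc _ _ hx hy (by linarith [hs.2]) hs.1 (by ring)
  suffices hbox : ∀ n j, fp n j ∈ Icc (hp lam flux α) (hp lam flux β) ∧
      fm n j ∈ Icc (hm lam flux α) (hm lam flux β) by
    rw [h.moment]
    exact add_mem_Icc_of_mem_Icc_hp_hm hlam.ne' (hbox n j).1 (hbox n j).2
  intro n
  induction n with
  | zero => exact fun j => ⟨hinitp j ▸ hp_mem (hinit j), hinitm j ▸ hm_mem (hinit j)⟩
  | succ n ih =>
    have hu : ∀ j, u n j ∈ Icc α β := fun j => by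
      rw [h.moment]
      exact add_mem_Icc_of_mem_Icc_hp_hm hlam.ne' (ih j).1 (ih j).2
    intro j
    rw [h.step_plus, h.step_minus]
    exact ⟨hcombo (ih (j - 1)).1 (hp_mem (hu (j - 1))),
      hcombo (ih (j + 1)).2 (hm_mem (hu (j + 1)))⟩

theorem tvSeq_succ_le (h : IsD1Q2Solution lam s flux fp fm u) (hlam : 0 < lam)
    (hs : s ∈ Icc 0 1) {S : Set ℝ}
    (hsub : ∀ a ∈ S, ∀ b ∈ S, |flux b - flux a| ≤ lam * |b - a|) {n : ℕ} (hu : ∀ j, u n j ∈ S) :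
    tvSeq (fp (n + 1)) + tvSeq (fm (n + 1)) ≤
      ENNReal.ofReal (1 - s) * (tvSeq (fp n) + tvSeq (fm n)) + ENNReal.ofReal s * tvSeq (u n) := by
  have hplus : tvSeq (fp (n + 1)) =
      tvSeq (fun j => (1 - s) * fp n j + s * hp lam flux (u n j)) := by
    rw [← tvSeq_comp_add_const (fun j => (1 - s) * fp n j + s * hp lam flux (u n j)) (-1)]
    exact congrArg tvSeq (funext fun j => by rw [h.step_plus, Int.add_neg_one])
  have hminus : tvSeq (fm (n + 1)) =
      tvSeq (fun j => (1 - s) * fm n j + s * hm lam flux (u n j)) := by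
    rw [← tvSeq_comp_add_const (fun j => (1 - s) * fm n j + s * hm lam flux (u n j)) 1]
    exact congrArg tvSeq (funext (h.step_minus n))
  have hcoeff : ∀ t : ℝ, 0 ≤ t → ENNReal.ofReal |t| = ENNReal.ofReal t :=
    fun t ht => by rw [abs_of_nonneg ht]
  calc tvSeq (fp (n + 1)) + tvSeq (fm (n + 1))
      ≤ (ENNReal.ofReal (1 - s) * tvSeq (fp n) +
            ENNReal.ofReal s * tvSeq (fun j => hp lam flux (u n j))) +
          (ENNReal.ofReal (1 - s) * tvSeq (fm n) +
            ENNReal.ofReal s * tvSeq (fun j => hm lam flux (u n j))) := by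
        rw [hplus, hminus, ← hcoeff (1 - s) (by linarith [hs.2]), ← hcoeff s hs.1]
        exact add_le_add (tvSeq_mul_add_mul_le _ _ _ _) (tvSeq_mul_add_mul_le _ _ _ _)
    _ = ENNReal.ofReal (1 - s) * (tvSeq (fp n) + tvSeq (fm n)) +
          ENNReal.ofReal s * (tvSeq (fun j => hp lam flux (u n j)) +
            tvSeq (fun j => hm lam flux (u n j))) := by ring
    _ = _ := by rw [tvSeq_hp_comp_add_tvSeq_hm_comp hlam hsub hu]

theorem tvSeq_fp_add_tvSeq_fm_le (h : IsD1Q2Solution lam s flux fp fm u) (hlam : 0 < lam)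
    (hs : s ∈ Icc 0 1) {S : Set ℝ}
    (hsub : ∀ a ∈ S, ∀ b ∈ S, |flux b - flux a| ≤ lam * |b - a|) (hu : ∀ n j, u n j ∈ S)
    (hinitp : ∀ j, fp 0 j = hp lam flux (u 0 j)) (hinitm : ∀ j, fm 0 j = hm lam flux (u 0 j))
    (n : ℕ) : tvSeq (fp n) + tvSeq (fm n) ≤ tvSeq (u 0) := by
  induction n with
  | zero =>
    rw [funext hinitp, funext hinitm, tvSeq_hp_comp_add_tvSeq_hm_comp hlam hsub (hu 0)]
  | succ n ih =>
    calc tvSeq (fp (n + 1)) + tvSeq (fm (n + 1))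
        ≤ ENNReal.ofReal (1 - s) * (tvSeq (fp n) + tvSeq (fm n)) +
            ENNReal.ofReal s * tvSeq (u n) := h.tvSeq_succ_le hlam hs hsub (hu n)
      _ ≤ ENNReal.ofReal (1 - s) * tvSeq (u 0) + ENNReal.ofReal s * tvSeq (u 0) := by
          gcongr
          exact (h.tvSeq_moment_le n).trans ih
      _ = tvSeq (u 0) := by
          rw [← add_mul, ← ENNReal.ofReal_add (by linarith [hs.2]) hs.1, sub_add_cancel,
            ENNReal.ofReal_one, one_mul]

end IsD1Q2Solution

theorem stmt5_general (flux : ℝ → ℝ) (hflux : ContDiff ℝ 1 flux)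
    (α β M lam s : ℝ) (hlampos : 0 < lam)
    (hs : s ∈ Set.Ioc (0 : ℝ) 1)
    (hM : ∀ ξ ∈ Set.Icc α β, |deriv flux ξ| ≤ M) (hlam : M ≤ lam)
    (fp fm u v : ℕ → ℤ → ℝ)
    (hu : ∀ n j, u n j = fp n j + fm n j)
    (hv : ∀ n j, v n j = lam * (fp n j - fm n j))
    (hrecp : ∀ n j, fp (n + 1) j = (1 - s) * fp n (j - 1) + s * hp lam flux (u n (j - 1)))
    (hrecm : ∀ n j, fm (n + 1) j = (1 - s) * fm n (j + 1) + s * hm lam flux (u n (j + 1)))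
    (hinit : ∀ j, u 0 j ∈ Set.Icc α β)
    (hinitp : ∀ j, fp 0 j = hp lam flux (u 0 j))
    (hinitm : ∀ j, fm 0 j = hm lam flux (u 0 j)) :
    ∀ n : ℕ,
      tvSeq (fp n) + tvSeq (fm n) ≤ tvSeq (u 0) ∧
      tvSeq (u n) ≤ tvSeq (u 0) ∧
      tvSeq (v n) ≤ ENNReal.ofReal lam * tvSeq (u 0) := by
  have hsub : ∀ a ∈ Icc α β, ∀ b ∈ Icc α β, |flux b - flux a| ≤ lam * |b - a| :=
    fun a ha b hb => calc
      |flux b - flux a| ≤ M * |b - a| :=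
        (convex_Icc α β).norm_image_sub_le_of_norm_deriv_le
          (fun x _ => hflux.differentiable one_ne_zero x) hM ha hb
      _ ≤ lam * |b - a| := by gcongr
  have hsol : IsD1Q2Solution lam s flux fp fm u := ⟨hu, hrecp, hrecm⟩
  have hs' : s ∈ Icc 0 1 := Ioc_subset_Icc_self hs
  have hbound := hsol.tvSeq_fp_add_tvSeq_fm_le hlampos hs' hsub
    (hsol.moment_mem_Icc hlampos hs' hsub hinit hinitp hinitm) hinitp hinitm
  intro n
  refine ⟨hbound n, (hsol.tvSeq_moment_le n).trans (hbound n), ?_⟩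
  calc tvSeq (v n) ≤ ENNReal.ofReal |lam| * (tvSeq (fp n) + tvSeq (fm n)) := by
        simpa only [← hv] using tvSeq_mul_sub_le lam (fp n) (fm n)
    _ ≤ ENNReal.ofReal lam * tvSeq (u 0) := by
        rw [abs_of_pos hlampos]
        gcongr
        exact hbound n

/-- Spatial total variation estimates for the D1Q2 scheme. -/
theorem stmt5 (flux : ℝ → ℝ) (hflux : ContDiff ℝ 1 flux)
    (α β M lam s : ℝ) (hαβ : α ≤ β) (hlampos : 0 < lam)
    (hs : s ∈ Set.Ioc (0 : ℝ) 1)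
    (hM : ∀ ξ ∈ Set.Icc α β, |deriv flux ξ| ≤ M) (hlam : M ≤ lam)
    (fp fm u v : ℕ → ℤ → ℝ)
    (hu : ∀ n j, u n j = fp n j + fm n j)
    (hv : ∀ n j, v n j = lam * (fp n j - fm n j))
    (hrecp : ∀ n j, fp (n + 1) j = (1 - s) * fp n (j - 1) + s * hp lam flux (u n (j - 1)))
    (hrecm : ∀ n j, fm (n + 1) j = (1 - s) * fm n (j + 1) + s * hm lam flux (u n (j + 1)))
    (hinit : ∀ j, u 0 j ∈ Set.Icc α β)
    (hTV0 : tvSeq (u 0) < ⊤)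
    (hinitp : ∀ j, fp 0 j = hp lam flux (u 0 j))
    (hinitm : ∀ j, fm 0 j = hm lam flux (u 0 j)) :
    ∀ n : ℕ,
      tvSeq (fp n) + tvSeq (fm n) ≤ tvSeq (u 0) ∧
      tvSeq (u n) ≤ tvSeq (u 0) ∧
      tvSeq (v n) ≤ ENNReal.ofReal lam * tvSeq (u 0) :=
  stmt5_general flux hflux α β M lam s hlampos hs hM hlam fp fm u v hu hv hrecp hrecm hinit hinitp
    hinitm
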